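/- arXiv:2201.11132 — 2 statements merged into one kernel-verified Lean document; each statement's English description precedes it below -/
import Mathlib

section
/- Under the null curvature condition, a null congruence with expansion θ = −1 at affine parameter 0 on each generator must reach a caustic (θ → −∞) at or before affine parameter 2 along each generator, provided each generator is complete up to that parameter. -/
/-- focusing theorem, ODE form: under the null curvature condition the
Raychaudhuri inequality gives `θ′ ≤ −θ²/2`; if the expansion `θ` is `−1` at affine parameter
`0` and `θ` is a finite-valued differentiable solution on `[0, T)`, then `T ≤ 2`:
the congruence reaches a caustic at or before affine parameter `2`. -/
theorem caustic_by_two (T : ℝ) (θ θ' : ℝ → ℝ)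
    (hderiv : ∀ x ∈ Set.Ico (0 : ℝ) T, HasDerivAt θ (θ' x) x)
    (h0 : θ 0 = -1)
    (hray : ∀ x ∈ Set.Ico (0 : ℝ) T, θ' x ≤ -(θ x) ^ 2 / 2) :
    T ≤ 2 := by
  by_contra h
  push_neg at h
  have hsub : Set.Icc (0:ℝ) 2 ⊆ Set.Ico (0:ℝ) T := fun x hx =>
    ⟨hx.1, lt_of_le_of_lt hx.2 h⟩
  -- θ is antitone on [0,2]
  have hcont : ContinuousOn θ (Set.Icc (0:ℝ) 2) := fun x hx =>
    (hderiv x (hsub hx)).continuousAt.continuousWithinAt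
  have hanti : AntitoneOn θ (Set.Icc (0:ℝ) 2) := by
    apply antitoneOn_of_deriv_nonpos (convex_Icc 0 2) hcont
    · intro x hx
      rw [interior_Icc] at hx
      exact (hderiv x (hsub ⟨le_of_lt hx.1, le_of_lt hx.2⟩)).differentiableAt.differentiableWithinAt
    · intro x hx
      rw [interior_Icc] at hx
      have hx' : x ∈ Set.Ico (0:ℝ) T := hsub ⟨le_of_lt hx.1, le_of_lt hx.2⟩
      rw [(hderiv x hx').deriv]
      have := hray x hx'
      nlinarith [sq_nonneg (θ x)]
  have hle : ∀ x ∈ Set.Icc (0:ℝ) 2, θ x ≤ -1 := by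
    intro x hx
    have := hanti (Set.left_mem_Icc.mpr (by norm_num)) hx hx.1
    linarith [h0 ▸ this]
  have hne : ∀ x ∈ Set.Icc (0:ℝ) 2, θ x ≠ 0 := fun x hx =>
    ne_of_lt (lt_of_le_of_lt (hle x hx) (by norm_num))
  -- g x = 1/θ x - x/2 is monotone on [0,2]
  set g : ℝ → ℝ := fun x => (θ x)⁻¹ - x / 2 with hg
  have hgderiv : ∀ x ∈ Set.Ico (0:ℝ) T, x ∈ Set.Icc (0:ℝ) 2 →
      HasDerivAt g (-θ' x / θ x ^ 2 - 1/2) x := by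
    intro x hx hx2
    have h1 : HasDerivAt (fun x => (θ x)⁻¹) (-θ' x / θ x ^ 2) x :=
      (hderiv x hx).inv (hne x hx2)
    have h2 : HasDerivAt (fun x : ℝ => x / 2) (1/2) x := by
      simpa using (hasDerivAt_id x).div_const 2
    exact h1.sub h2
  have hgcont : ContinuousOn g (Set.Icc (0:ℝ) 2) := fun x hx =>
    (hgderiv x (hsub hx) hx).continuousAt.continuousWithinAt
  have hmono : MonotoneOn g (Set.Icc (0:ℝ) 2) := by
    apply monotoneOn_of_deriv_nonneg (convex_Icc 0 2) hgcont
    · intro x hx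
      rw [interior_Icc] at hx
      have hx2 : x ∈ Set.Icc (0:ℝ) 2 := ⟨le_of_lt hx.1, le_of_lt hx.2⟩
      exact (hgderiv x (hsub hx2) hx2).differentiableAt.differentiableWithinAt
    intro x hx
    rw [interior_Icc] at hx
    have hx2 : x ∈ Set.Icc (0:ℝ) 2 := ⟨le_of_lt hx.1, le_of_lt hx.2⟩
    have hxT : x ∈ Set.Ico (0:ℝ) T := hsub hx2
    rw [(hgderiv x hxT hx2).deriv]
    have hr := hray x hxT
    have hθ : θ x ≤ -1 := hle x hx2
    have hsq : (1:ℝ) ≤ θ x ^ 2 := by nlinarith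
    rw [sub_nonneg, le_div_iff₀ (by nlinarith : (0:ℝ) < θ x ^ 2)]
    nlinarith
  have h02 := hmono (Set.left_mem_Icc.mpr (by norm_num))
    (Set.right_mem_Icc.mpr (by norm_num)) (by norm_num)
  have hg0 : g 0 = -1 := by simp [hg, h0]
  have hg2 : g 2 = (θ 2)⁻¹ - 1 := by simp [hg]
  have hθ2 : θ 2 ≤ -1 := hle 2 (Set.right_mem_Icc.mpr (by norm_num))
  have hinv : (θ 2)⁻¹ < 0 := inv_lt_zero.mpr (by linarith)
  rw [hg0, hg2] at h02
  linarith
end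

section
/- If θ : [0, T) → ℝ is differentiable, θ(0) = θ₀ < 0, and θ′(λ) ≤ −θ(λ)²/2 for all λ, then T ≤ 2/|θ₀| (the solution blows up to −∞ by affine parameter 2/|θ₀|). -/
/-- focusing lemma: if `θ : [0, T) → ℝ` is differentiable with
`θ(0) = θ₀ < 0` and `θ′ ≤ −θ²/2`, then `T ≤ 2/|θ₀|`. -/
theorem focusing_blowup (T θ₀ : ℝ) (θ θ' : ℝ → ℝ)
    (hθ₀ : θ₀ < 0)
    (hderiv : ∀ x ∈ Set.Ico (0 : ℝ) T, HasDerivAt θ (θ' x) x)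
    (h0 : θ 0 = θ₀)
    (hray : ∀ x ∈ Set.Ico (0 : ℝ) T, θ' x ≤ -(θ x) ^ 2 / 2) :
    T ≤ 2 / |θ₀| := by
  by_contra hcon
  push_neg at hcon
  have habs : |θ₀| = -θ₀ := abs_of_neg hθ₀
  have hc : (0 : ℝ) < 2 / |θ₀| := by
    apply div_pos (by norm_num)
    rw [habs]; linarith
  -- main claim: every x in [0, T) satisfies x < 2/|θ₀|
  have key : ∀ x ∈ Set.Ico (0 : ℝ) T, x < 2 / |θ₀| := by
    intro x hx
    obtain ⟨hx0, hxT⟩ := hx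
    have hsub : Set.Icc (0 : ℝ) x ⊆ Set.Ico (0 : ℝ) T := fun t ht =>
      ⟨ht.1, lt_of_le_of_lt ht.2 hxT⟩
    have hsubI : Set.Ioo (0 : ℝ) x ⊆ Set.Ico (0 : ℝ) T := fun t ht =>
      hsub ⟨le_of_lt ht.1, le_of_lt ht.2⟩
    have hint : interior (Set.Icc (0 : ℝ) x) = Set.Ioo 0 x := interior_Icc
    -- θ is antitone on [0, x]
    have hanti : AntitoneOn θ (Set.Icc 0 x) := by
      apply antitoneOn_of_deriv_nonpos (convex_Icc 0 x)
      · intro t ht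
        exact (hderiv t (hsub ht)).continuousAt.continuousWithinAt
      · rw [hint]
        intro t ht
        exact (hderiv t (hsubI ht)).differentiableAt.differentiableWithinAt
      · rw [hint]
        intro t ht
        rw [(hderiv t (hsubI ht)).deriv]
        have := hray t (hsubI ht)
        nlinarith [sq_nonneg (θ t)]
    -- θ t ≤ θ₀ < 0 on [0, x]
    have hle : ∀ t ∈ Set.Icc (0 : ℝ) x, θ t ≤ θ₀ := by
      intro t ht
      have := hanti ⟨le_refl 0, hx0⟩ ht ht.1
      rwa [h0] at this
    have hneg : ∀ t ∈ Set.Icc (0 : ℝ) x, θ t < 0 := fun t ht =>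
      lt_of_le_of_lt (hle t ht) hθ₀
    -- v t = -(θ t)⁻¹ + t/2 is antitone on [0, x]
    set v : ℝ → ℝ := fun t => -(θ t)⁻¹ + t / 2 with hv
    have hvderiv : ∀ t ∈ Set.Icc (0 : ℝ) x,
        HasDerivAt v (θ' t / (θ t) ^ 2 + 1 / 2) t := by
      intro t ht
      have hne : θ t ≠ 0 := ne_of_lt (hneg t ht)
      have h1 : HasDerivAt (fun s => -(θ s)⁻¹) (θ' t / (θ t) ^ 2) t := by
        have := ((hderiv t (hsub ht)).inv hne).neg
        rw [neg_div, neg_neg] at this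
        exact this
      have h2 : HasDerivAt (fun s : ℝ => s / 2) (1 / 2) t := by
        simpa using (hasDerivAt_id t).div_const 2
      exact h1.add h2
    have hvanti : AntitoneOn v (Set.Icc 0 x) := by
      apply antitoneOn_of_deriv_nonpos (convex_Icc 0 x)
      · intro t ht
        exact (hvderiv t ht).continuousAt.continuousWithinAt
      · rw [hint]
        intro t ht
        have ht' : t ∈ Set.Icc (0 : ℝ) x := ⟨le_of_lt ht.1, le_of_lt ht.2⟩
        exact (hvderiv t ht').differentiableAt.differentiableWithinAt
      · rw [hint]
        intro t ht
        have ht' : t ∈ Set.Icc (0 : ℝ) x := ⟨le_of_lt ht.1, le_of_lt ht.2⟩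
        rw [(hvderiv t ht').deriv]
        have hr := hray t (hsubI ht)
        have hne : θ t ≠ 0 := ne_of_lt (hneg t ht')
        have hθ2 : (0 : ℝ) < (θ t) ^ 2 := by positivity
        have : θ' t / (θ t) ^ 2 ≤ -(1 / 2) := by
          rw [div_le_iff₀ hθ2]; nlinarith
        linarith
    have hvx : v x ≤ v 0 := hvanti ⟨le_refl 0, hx0⟩ ⟨hx0, le_refl x⟩ hx0
    have hθxneg : θ x < 0 := hneg x ⟨hx0, le_refl x⟩
    have hinvx : (θ x)⁻¹ < 0 := inv_lt_zero.mpr hθxneg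
    have hv0 : v 0 = -θ₀⁻¹ := by simp [hv, h0]
    have hvxval : v x = -(θ x)⁻¹ + x / 2 := rfl
    -- so x/2 < -θ₀⁻¹
    have hx2 : x / 2 < -θ₀⁻¹ := by
      rw [hvxval, hv0] at hvx
      linarith
    have : x < 2 / (-θ₀) := by
      rw [div_eq_mul_inv, ← neg_inv]
      linarith
    rwa [habs]
  have := key (2 / |θ₀|) ⟨le_of_lt hc, hcon⟩
  exact lt_irrefl _ this
end
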